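/- arXiv:1306.0860 — 4 statements merged into one kernel-verified Lean document; each statement's English description precedes it below -/
import Mathlib

section
/- In the C*-algebra C_b(ℝ, ℂ) of bounded continuous complex-valued functions on ℝ, the smallest closed star-subalgebra containing all the functions x ↦ (i − s·x)⁻¹ for s ∈ ℝ equals the set {g + c·1 : g ∈ C₀(ℝ, ℂ), c ∈ ℂ}, where C₀(ℝ, ℂ) denotes the continuous functions vanishing at infinity and 1 is the constant function with value 1. -/
open BoundedContinuousFunction

/-!
Restriction to `ℝ` identifies `C(OnePoint ℝ, ℂ)` isometrically with `C₀(ℝ, ℂ) + ℂ·1`, which is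
therefore closed in `C_b(ℝ, ℂ)`; it contains every `x ↦ (i - s x)⁻¹` (the constant `-i` for
`s = 0`, a function vanishing at infinity otherwise). Conversely, the preimage of the closure
under restriction is a closed star subalgebra of `C(OnePoint ℝ, ℂ)` containing `1` and the
injective extension of `x ↦ (i - x)⁻¹` by `0` at `∞`, so it is everything by Stone–Weierstrass.
-/

open Filter Topology

namespace OnePoint

variable {X 𝕜 : Type*} [TopologicalSpace X] [RCLike 𝕜]

def restrictBCF : C(OnePoint X, 𝕜) →⋆ₐ[𝕜] (X →ᵇ 𝕜) where
  toFun f := (mkOfCompact f).compContinuous ⟨(↑), continuous_coe⟩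
  map_one' := rfl
  map_mul' _ _ := rfl
  map_zero' := rfl
  map_add' _ _ := rfl
  commutes' _ := rfl
  map_star' _ := rfl

@[simp] lemma restrictBCF_apply (f : C(OnePoint X, 𝕜)) (x : X) : restrictBCF f x = f x := rfl

lemma isometry_restrictBCF [NoncompactSpace X] :
    Isometry (restrictBCF : C(OnePoint X, 𝕜) → X →ᵇ 𝕜) := by
  refine AddMonoidHomClass.isometry_of_norm restrictBCF fun f => le_antisymm ?_ ?_
  · exact (norm_le (norm_nonneg _)).2 fun x => f.norm_coe_le_norm x
  · refine (ContinuousMap.norm_le f (norm_nonneg _)).2 fun p => ?_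
    exact denseRange_coe.induction_on p (isClosed_le (by fun_prop) continuous_const)
      fun x => (restrictBCF f).norm_coe_le_norm x

lemma range_restrictBCF [T2Space X] :
    Set.range (restrictBCF : C(OnePoint X, 𝕜) → X →ᵇ 𝕜) =
      {f | ∃ (g : ZeroAtInftyContinuousMap X 𝕜) (c : 𝕜), f = g.toBCF + c • 1} := by
  ext f
  constructor
  · rintro ⟨F, rfl⟩
    have hF : Tendsto (fun x : X => F x) (cocompact X) (𝓝 (F ∞)) := by
      rw [← coclosedCompact_eq_cocompact]
      exact (F.continuous.tendsto ∞).comp tendsto_coe_infty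
    refine ⟨⟨⟨fun x => F x - F ∞, (F.continuous.comp continuous_coe).sub continuous_const⟩,
      by simpa using hF.sub_const (F ∞)⟩, F ∞, ?_⟩
    ext x
    simp
  · rintro ⟨g, c, rfl⟩
    have hg : Tendsto (fun x => g x + c) (coclosedCompact X) (𝓝 c) := by
      rw [coclosedCompact_eq_cocompact]
      simpa using g.zero_at_infty'.add_const c
    refine ⟨continuousMapMk (g + ContinuousMap.const X c) c hg, ?_⟩
    ext x
    simp [continuousMapMk]

end OnePoint

theorem NonUnitalStarSubalgebra.eq_top_of_isClosed_of_separatesPoints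
    {X 𝕜 : Type*} [TopologicalSpace X] [CompactSpace X] [RCLike 𝕜]
    {B : NonUnitalStarSubalgebra 𝕜 C(X, 𝕜)} (hB : IsClosed (B : Set C(X, 𝕜))) (h1 : 1 ∈ B)
    (hsep : Set.SeparatesPoints ((⇑) '' (B : Set C(X, 𝕜)))) : B = ⊤ := by
  have hdense := ContinuousMap.starSubalgebra_topologicalClosure_eq_top_of_separatesPoints
    (B.toStarSubalgebra h1) hsep
  ext f
  have hf : f ∈ (B.toStarSubalgebra h1).topologicalClosure := hdense ▸ StarSubalgebra.mem_top
  rw [← SetLike.mem_coe, StarSubalgebra.topologicalClosure_coe] at hf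
  simpa using hB.closure_subset hf

section Resolvents

open Complex

lemma Complex.I_sub_ofReal_ne_zero (r : ℝ) : I - r ≠ 0 := by
  intro h
  simpa using congrArg im h

lemma Complex.tendsto_inv_I_sub_mul_cocompact {s : ℝ} (hs : s ≠ 0) :
    Tendsto (fun x : ℝ => (I - s * x)⁻¹) (cocompact ℝ) (𝓝 0) := by
  rw [← Metric.cobounded_eq_cocompact]
  exact tendsto_inv₀_cobounded.comp <| (tendsto_const_sub_cobounded I).comp <|
    (tendsto_mul_left_cobounded (ofReal_ne_zero.2 hs)).comp <|
      RCLike.tendsto_ofReal_cobounded_cobounded ℂ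

def resolventFunctions : Set (ℝ →ᵇ ℂ) := {f | ∃ s : ℝ, ∀ x : ℝ, f x = (I - s * x)⁻¹}

noncomputable def resolventOnePoint : C(OnePoint ℝ, ℂ) :=
  OnePoint.continuousMapMk
    ⟨fun x : ℝ => (I - x)⁻¹, continuous_const.sub continuous_ofReal |>.inv₀ I_sub_ofReal_ne_zero⟩
    0 (by simpa [coclosedCompact_eq_cocompact] using tendsto_inv_I_sub_mul_cocompact one_ne_zero)

lemma resolventOnePoint_injective : Function.Injective resolventOnePoint := by
  intro p q h
  induction p using OnePoint.rec <;> induction q using OnePoint.rec <;>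
    simp_all [resolventOnePoint, OnePoint.continuousMapMk, I_sub_ofReal_ne_zero,
      (I_sub_ofReal_ne_zero _).symm]

lemma restrictBCF_resolventOnePoint_mem :
    OnePoint.restrictBCF resolventOnePoint ∈ resolventFunctions :=
  ⟨1, fun x => by simp [resolventOnePoint, OnePoint.continuousMapMk]⟩

lemma one_mem_adjoin_resolventFunctions :
    (1 : ℝ →ᵇ ℂ) ∈ NonUnitalStarAlgebra.adjoin ℂ resolventFunctions := by
  have h : (-I) • (1 : ℝ →ᵇ ℂ) ∈ resolventFunctions := ⟨0, fun x => by simp⟩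
  simpa [smul_smul] using
    SMulMemClass.smul_mem I (NonUnitalStarAlgebra.subset_adjoin ℂ resolventFunctions h)

lemma resolventFunctions_subset_range_restrictBCF :
    resolventFunctions ⊆ Set.range OnePoint.restrictBCF := by
  rintro f ⟨s, hf⟩
  rw [OnePoint.range_restrictBCF]
  rcases eq_or_ne s 0 with rfl | hs
  · exact ⟨0, -I, by ext x; simp [hf]⟩
  · refine ⟨⟨f, ?_⟩, 0, by rw [zero_smul, add_zero]; rfl⟩
    simpa [← hf] using tendsto_inv_I_sub_mul_cocompact hs

end Resolvents

/-- In the C*-algebra `C_b(ℝ, ℂ)` of bounded continuous complex functions on `ℝ`, the smallest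
closed star-subalgebra containing all the functions `x ↦ (i − s·x)⁻¹`, `s ∈ ℝ`, equals the set
of functions `g + c·1` with `g ∈ C₀(ℝ, ℂ)` and `c ∈ ℂ`. -/
theorem closure_adjoin_resolvent_functions_eq_zeroAtInfty_plus_const :
    closure ((NonUnitalStarAlgebra.adjoin ℂ
        {f : BoundedContinuousFunction ℝ ℂ |
          ∃ s : ℝ, ∀ x : ℝ, f x = (Complex.I - (s : ℂ) * (x : ℂ))⁻¹} :
        NonUnitalStarSubalgebra ℂ (BoundedContinuousFunction ℝ ℂ)) :
          Set (BoundedContinuousFunction ℝ ℂ))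
      = {f : BoundedContinuousFunction ℝ ℂ |
          ∃ (g : ZeroAtInftyContinuousMap ℝ ℂ) (c : ℂ),
            f = g.toBCF + c • (1 : BoundedContinuousFunction ℝ ℂ)} := by
  change closure (NonUnitalStarAlgebra.adjoin ℂ resolventFunctions : Set (ℝ →ᵇ ℂ)) = _
  set A := NonUnitalStarAlgebra.adjoin ℂ resolventFunctions
  set R : C(OnePoint ℝ, ℂ) →⋆ₐ[ℂ] ℝ →ᵇ ℂ := OnePoint.restrictBCF
  rw [← OnePoint.range_restrictBCF]
  refine subset_antisymm ?_ ?_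
  · refine closure_minimal ?_ OnePoint.isometry_restrictBCF.isClosedEmbedding.isClosed_range
    exact NonUnitalStarAlgebra.adjoin_le (S := NonUnitalStarAlgHom.range R)
      resolventFunctions_subset_range_restrictBCF
  · have hA_sub : (A : Set (ℝ →ᵇ ℂ)) ⊆ A.topologicalClosure := subset_closure
    have htop : A.topologicalClosure.comap R = ⊤ := by
      refine NonUnitalStarSubalgebra.eq_top_of_isClosed_of_separatesPoints
        (A.isClosed_topologicalClosure.preimage OnePoint.isometry_restrictBCF.continuous) ?_ ?_
      · simpa using hA_sub one_mem_adjoin_resolventFunctions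
      · intro p q hpq
        refine ⟨resolventOnePoint, ⟨resolventOnePoint, ?_, rfl⟩, resolventOnePoint_injective.ne hpq⟩
        exact hA_sub (NonUnitalStarAlgebra.subset_adjoin ℂ _ restrictBCF_resolventOnePoint_mem)
    rintro _ ⟨f, rfl⟩
    have hf : f ∈ A.topologicalClosure.comap R := htop ▸ NonUnitalStarAlgebra.mem_top
    exact hf
end

section
/- Let A be a unital complex C*-algebra, let b ∈ A be self-adjoint, and let B ⊆ A be a closed star-subalgebra (not necessarily containing the unit). If R(μ₀, b) ∈ B for some μ₀ ∈ ℝ \ {0}, then R(μ, b) ∈ B for every μ ∈ ℝ \ {0}. -/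
/-!
Two resolvents are related by the resolvent equation
`R(ν, b) = R(μ, b) (1 - i(μ - ν) R(μ, b))⁻¹`, and since `‖R(μ, b)‖ ≤ 1/|μ|` the inverse is a
Neumann series whenever `|μ - ν| < |μ|`; its terms are multiples of powers of `R(μ, b)`, so
`R(ν, b)` lies in the closed subalgebra `B` as soon as `R(μ, b)` does. Every `μ > 0` is reached
from `μ₀ > 0` through the points `(3/2)ⁿ μ₀`, and `R(-μ, b) = R(μ, b)*` changes the sign.
-/

/-- The resolvent `R(λ, a) = (iλ·1 − a)⁻¹` of an element `a` of a unital algebra,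
defined via `Ring.inverse`. -/
noncomputable def rsl {A : Type*} [CStarAlgebra A] (l : ℝ) (a : A) : A :=
  Ring.inverse (((l : ℂ) * Complex.I) • (1 : A) - a)

open Complex

theorem mul_ringInverse_one_sub_mem {R S : Type*} [NormedRing R] [HasSummableGeomSeries R]
    [SetLike S R] [NonUnitalSubsemiringClass S R] {s : S} (hs : IsClosed (s : Set R))
    {x y : R} (hx : x ∈ s) (hy : y ∈ s) (hy1 : ‖y‖ < 1) :
    x * Ring.inverse (1 - y) ∈ s := by
  have hterm : ∀ n : ℕ, x * y ^ n ∈ s := by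
    intro n
    induction n with
    | zero => simpa using hx
    | succ n ih => rw [pow_succ, ← mul_assoc]; exact mul_mem ih hy
  rw [← geom_series_eq_inverse y hy1, ← (summable_geometric_of_norm_lt_one hy1).tsum_mul_left]
  exact tsum_mem hs hterm

namespace IsSelfAdjoint

variable {A : Type*} [CStarAlgebra A] {b : A}

theorem ofReal_mul_I_sub_ne_zero (hb : IsSelfAdjoint b) {μ : ℝ} (hμ : μ ≠ 0) {z : ℂ}
    (hz : z ∈ spectrum ℂ b) : (μ : ℂ) * I - z ≠ 0 := by
  intro h
  have him := congrArg Complex.im (hb.mem_spectrum_eq_re hz)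
  rw [← sub_eq_zero.1 h] at him
  simp [hμ] at him

theorem isUnit_ofReal_mul_I_smul_one_sub (hb : IsSelfAdjoint b) {μ : ℝ} (hμ : μ ≠ 0) :
    IsUnit (((μ : ℂ) * I) • (1 : A) - b) := by
  rw [← Algebra.algebraMap_eq_smul_one, ← spectrum.notMem_iff]
  intro h
  simpa using hb.ofReal_mul_I_sub_ne_zero hμ h

theorem rsl_eq_cfc (hb : IsSelfAdjoint b) {μ : ℝ} (hμ : μ ≠ 0) :
    rsl μ b = cfc (fun z : ℂ => ((μ : ℂ) * I - z)⁻¹) b := by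
  rw [cfc_inv _ b (fun z hz => hb.ofReal_mul_I_sub_ne_zero hμ hz), cfc_sub _ _ b, cfc_const _ b,
    cfc_id' ℂ b, Algebra.algebraMap_eq_smul_one, rsl]

theorem norm_rsl_le (hb : IsSelfAdjoint b) {μ : ℝ} (hμ : μ ≠ 0) : ‖rsl μ b‖ ≤ |μ|⁻¹ := by
  rw [hb.rsl_eq_cfc hμ]
  refine norm_cfc_le (by positivity) fun z hz => ?_
  have hne := hb.ofReal_mul_I_sub_ne_zero hμ hz
  rw [norm_inv, inv_le_inv₀ (norm_pos_iff.mpr hne) (by positivity)]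
  calc |μ| = |((μ : ℂ) * I - z).im| := by rw [hb.mem_spectrum_eq_re hz]; simp
    _ ≤ ‖(μ : ℂ) * I - z‖ := abs_im_le_norm _

theorem rsl_eq_rsl_mul_ringInverse (hb : IsSelfAdjoint b) {μ : ℝ} (hμ : μ ≠ 0) (ν : ℝ) :
    rsl ν b = rsl μ b * Ring.inverse (1 - (((μ - ν : ℝ) : ℂ) * I) • rsl μ b) := by
  set u := ((μ : ℂ) * I) • (1 : A) - b
  have hu := hb.isUnit_ofReal_mul_I_smul_one_sub hμ
  have hRu : rsl μ b * u = 1 := Ring.inverse_mul_cancel u hu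
  have huR : u * rsl μ b = 1 := Ring.mul_inverse_cancel u hu
  have hcomm : Commute (1 - (((μ - ν : ℝ) : ℂ) * I) • rsl μ b) u :=
    (Commute.one_left u).sub_left
      ((show Commute (rsl μ b) u from hRu.trans huR.symm).smul_left _)
  have hfactor : ((ν : ℂ) * I) • (1 : A) - b = (1 - (((μ - ν : ℝ) : ℂ) * I) • rsl μ b) * u := by
    rw [sub_mul, one_mul, smul_mul_assoc, hRu]
    simp only [u, ofReal_sub]
    module
  rw [rsl, hfactor, Ring.mul_inverse_rev' hcomm]
  rfl

theorem rsl_neg (hb : IsSelfAdjoint b) (μ : ℝ) : rsl (-μ) b = star (rsl μ b) := by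
  rw [rsl, rsl, ← Ring.inverse_star, star_sub, star_smul, star_one, hb.star_eq]
  congr 2
  simp

variable {B : NonUnitalStarSubalgebra ℂ A}

theorem rsl_mem_of_abs_sub_lt (hb : IsSelfAdjoint b) (hB : IsClosed (B : Set A)) {μ ν : ℝ}
    (hμν : |μ - ν| < |μ|) (hmem : rsl μ b ∈ B) : rsl ν b ∈ B := by
  have hμ : μ ≠ 0 := abs_pos.mp ((abs_nonneg _).trans_lt hμν)
  rw [hb.rsl_eq_rsl_mul_ringInverse hμ ν]
  refine mul_ringInverse_one_sub_mem hB hmem (SMulMemClass.smul_mem _ hmem) ?_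
  calc ‖(((μ - ν : ℝ) : ℂ) * I) • rsl μ b‖ ≤ |μ - ν| * |μ|⁻¹ := by
        rw [norm_smul, norm_mul, norm_I, mul_one, norm_real, Real.norm_eq_abs]
        gcongr
        exact hb.norm_rsl_le hμ
    _ < |μ| * |μ|⁻¹ := by gcongr
    _ = 1 := mul_inv_cancel₀ (abs_ne_zero.mpr hμ)

theorem rsl_mem_of_pos_of_lt_two_mul (hb : IsSelfAdjoint b) (hB : IsClosed (B : Set A))
    {μ ν : ℝ} (hν : 0 < ν) (hνμ : ν < 2 * μ) (hmem : rsl μ b ∈ B) : rsl ν b ∈ B :=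
  hb.rsl_mem_of_abs_sub_lt hB (by rw [abs_lt, abs_of_pos (by linarith)]; constructor <;> linarith)
    hmem

theorem rsl_mem_of_pos (hb : IsSelfAdjoint b) (hB : IsClosed (B : Set A)) {μ₀ : ℝ}
    (hμ₀ : 0 < μ₀) (hmem : rsl μ₀ b ∈ B) {μ : ℝ} (hμ : 0 < μ) : rsl μ b ∈ B := by
  have hsteps : ∀ n : ℕ, rsl ((3 / 2) ^ n * μ₀) b ∈ B := by
    intro n
    induction n with
    | zero => simpa using hmem
    | succ n ih =>
      refine hb.rsl_mem_of_pos_of_lt_two_mul hB (by positivity) ?_ ih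
      rw [pow_succ]
      nlinarith [pow_pos (by norm_num : (0 : ℝ) < 3 / 2) n]
  obtain ⟨n, hn⟩ := pow_unbounded_of_one_lt (μ / μ₀) (by norm_num : (1 : ℝ) < 3 / 2)
  rw [div_lt_iff₀ hμ₀] at hn
  exact hb.rsl_mem_of_pos_of_lt_two_mul hB hμ (by linarith) (hsteps n)

theorem rsl_neg_mem_iff (hb : IsSelfAdjoint b) (μ : ℝ) : rsl (-μ) b ∈ B ↔ rsl μ b ∈ B := by
  rw [hb.rsl_neg, star_mem_iff]

end IsSelfAdjoint

/-- If `b` is a self-adjoint element of a unital complex C*-algebra `A`, `B` is a closed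
(not necessarily unital) star-subalgebra of `A`, and the resolvent `R(μ₀, b)` belongs to `B`
for a single `μ₀ ∈ ℝ \ {0}`, then `R(μ, b) ∈ B` for every `μ ∈ ℝ \ {0}`. -/
theorem resolvent_mem_of_mem_single {A : Type*} [CStarAlgebra A] (b : A)
    (hb : IsSelfAdjoint b) (B : NonUnitalStarSubalgebra ℂ A) (hB : IsClosed (B : Set A))
    (μ₀ : ℝ) (hμ₀ : μ₀ ≠ 0) (hmem : rsl μ₀ b ∈ B) :
    ∀ μ : ℝ, μ ≠ 0 → rsl μ b ∈ B := by
  have habs : rsl |μ₀| b ∈ B := by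
    rcases abs_choice μ₀ with h | h <;> rw [h]
    exacts [hmem, (hb.rsl_neg_mem_iff μ₀).2 hmem]
  have hpos : ∀ {μ : ℝ}, 0 < μ → rsl μ b ∈ B :=
    hb.rsl_mem_of_pos hB (abs_pos.mpr hμ₀) habs
  intro μ hμ
  rcases hμ.lt_or_gt with hneg | hgt
  · exact (hb.rsl_neg_mem_iff μ).1 (hpos (neg_pos.mpr hneg))
  · exact hpos hgt
end

section
/- Let H be a complex Hilbert space, let B be a closed subalgebra of the algebra B(H) of bounded operators on H, let t > 0, and let f, g : [0, t] → B(H) be maps such that: (i) f is continuous in the operator norm and f(s) ∈ B for all s; (ii) s ↦ g(s)x is continuous for every x ∈ H and sup_{s ∈ [0,t]} ‖g(s)‖ ≤ C < ∞; (iii) for every subinterval [r, r'] ⊆ [0, t], the operator x ↦ ∫_r^{r'} g(s)x ds belongs to B. Then the map T : H → H defined by T x = ∫₀ᵗ f(s)(g(s)x) ds is a bounded linear operator and T ∈ B. -/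
/-!
Since `g` is only strongly continuous, `s ↦ f s ∘L g s` need not be Bochner integrable in
operator norm, so `T` is built pointwise and bounded by `sup ‖f‖ · C · t`. Splitting `[0, t]` into
`n` equal pieces and freezing `f` at the right endpoints gives the Riemann-type sums
`∑ⱼ f(sⱼ₊₁) ∘L Gⱼ`, where `Gⱼ` is the integral of `g` over the `j`-th piece; these lie in `B`.
Uniform continuity of `f` on `[0, t]` bounds `‖T - ∑ⱼ f(sⱼ₊₁) ∘L Gⱼ‖` by `ω_f(t/n) · C · t`, so
`T` is a norm limit of elements of the closed set `B`.
-/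

open intervalIntegral Set

open Filter Topology MeasureTheory Finset

open scoped Interval

section StrongIntegral

variable {E F G : Type*} [NormedAddCommGroup E] [NormedSpace ℂ E]
  [NormedAddCommGroup F] [NormedSpace ℂ F] [NormedAddCommGroup G] [NormedSpace ℂ G]

theorem exists_continuousLinearMap_eq_intervalIntegral_apply {A : ℝ → E →L[ℂ] G} {a b K : ℝ}
    (hA : ∀ x, IntervalIntegrable (fun s => A s x) volume a b)
    (hK : ∀ s ∈ Ι a b, ‖A s‖ ≤ K) :
    ∃ T : E →L[ℂ] G, ∀ x, T x = ∫ s in a..b, A s x := by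
  let T : E →ₗ[ℂ] G :=
    { toFun := fun x => ∫ s in a..b, A s x
      map_add' := fun x y => by simp only [map_add]; exact integral_add (hA x) (hA y)
      map_smul' := fun c x => by simp only [map_smul, RingHom.id_apply]; exact integral_smul c _ }
  refine ⟨T.mkContinuous (K * |b - a|) fun x => ?_, fun x => rfl⟩
  calc ‖∫ s in a..b, A s x‖ ≤ K * ‖x‖ * |b - a| :=
        norm_integral_le_of_norm_le_const fun s hs => (A s).le_of_opNorm_le (hK s hs) x
    _ = K * |b - a| * ‖x‖ := by ring

variable [CompleteSpace F] [CompleteSpace G]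

theorem norm_intervalIntegral_apply_sub_apply_intervalIntegral_le {f : ℝ → F →L[ℂ] G}
    {u : ℝ → F} {L : F →L[ℂ] G} {a b ε M : ℝ} (hu : IntervalIntegrable u volume a b)
    (hfu : IntervalIntegrable (fun s => f s (u s)) volume a b)
    (hf : ∀ s ∈ Ι a b, ‖f s - L‖ ≤ ε) (hM : ∀ s ∈ Ι a b, ‖u s‖ ≤ M) :
    ‖(∫ s in a..b, f s (u s)) - L (∫ s in a..b, u s)‖ ≤ ε * M * |b - a| := by
  have hLu : IntervalIntegrable (fun s => L (u s)) volume a b :=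
    ⟨L.integrable_comp hu.1, L.integrable_comp hu.2⟩
  rw [← L.intervalIntegral_comp_comm hu, ← integral_sub hfu hLu]
  refine norm_integral_le_of_norm_le_const fun s hs => ?_
  calc ‖f s (u s) - L (u s)‖ = ‖(f s - L) (u s)‖ := rfl
    _ ≤ ‖f s - L‖ * ‖u s‖ := (f s - L).le_opNorm _
    _ ≤ ε * M := mul_le_mul (hf s hs) (hM s hs) (norm_nonneg _) ((norm_nonneg _).trans (hf s hs))

theorem norm_intervalIntegral_sub_sum_apply_intervalIntegral_le {f : ℝ → F →L[ℂ] G}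
    {u : ℝ → F} {L : ℕ → F →L[ℂ] G} {a : ℕ → ℝ} {n : ℕ} {ε M : ℝ}
    (ha : ∀ j < n, a j ≤ a (j + 1))
    (hu : ∀ j < n, IntervalIntegrable u volume (a j) (a (j + 1)))
    (hfu : ∀ j < n, IntervalIntegrable (fun s => f s (u s)) volume (a j) (a (j + 1)))
    (hf : ∀ j < n, ∀ s ∈ Ioc (a j) (a (j + 1)), ‖f s - L j‖ ≤ ε)
    (hM : ∀ j < n, ∀ s ∈ Ioc (a j) (a (j + 1)), ‖u s‖ ≤ M) :
    ‖(∫ s in a 0..a n, f s (u s)) - ∑ j ∈ range n, L j (∫ s in a j..a (j + 1), u s)‖ ≤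
      ε * M * (a n - a 0) := by
  rw [← sum_integral_adjacent_intervals hfu, ← sum_sub_distrib, ← sum_range_sub, mul_sum]
  refine (norm_sum_le _ _).trans (sum_le_sum fun j hj => ?_)
  have hj : j < n := mem_range.1 hj
  have hIoc : Ι (a j) (a (j + 1)) = Ioc (a j) (a (j + 1)) := uIoc_of_le (ha j hj)
  have := norm_intervalIntegral_apply_sub_apply_intervalIntegral_le (hu j hj) (hfu j hj)
    (hIoc ▸ hf j hj) (hIoc ▸ hM j hj)
  rwa [abs_of_nonneg (sub_nonneg.2 (ha j hj))] at this

theorem natCast_mul_div_mem_Icc {t : ℝ} (ht : 0 ≤ t) {j n : ℕ} (hjn : j ≤ n) :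
    (j : ℝ) * t / n ∈ Icc 0 t :=
  ⟨by positivity, div_le_of_le_mul₀ n.cast_nonneg ht (by rw [mul_comm]; gcongr)⟩

variable {f : ℝ → F →L[ℂ] G} {g : ℝ → E →L[ℂ] F} {t C : ℝ} {T : E →L[ℂ] G}

theorem norm_sub_sum_comp_intervalIntegral_le (ht : 0 ≤ t) {n : ℕ} (hn : n ≠ 0)
    (hf : ContinuousOn f (Icc 0 t)) (hg : ∀ x, ContinuousOn (fun s => g s x) (Icc 0 t))
    (hC : ∀ s ∈ Icc 0 t, ‖g s‖ ≤ C) (hT : ∀ x, T x = ∫ s in 0..t, f s (g s x))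
    {P : ℕ → E →L[ℂ] F} (hP : ∀ j < n, ∀ x, P j x = ∫ s in j * t / n..(j + 1) * t / n, g s x)
    {η : ℝ} (hη : 0 ≤ η)
    (hfη : ∀ s ∈ Icc 0 t, ∀ s' ∈ Icc 0 t, dist s s' ≤ t / n → ‖f s - f s'‖ ≤ η) :
    ‖T - ∑ j ∈ range n, f ((j + 1) * t / n) ∘L P j‖ ≤ η * C * t := by
  have hC0 : 0 ≤ C := (norm_nonneg _).trans (hC 0 ⟨le_rfl, ht⟩)
  set a : ℕ → ℝ := fun j => j * t / n
  have ha0 : a 0 = 0 := by simp [a]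
  have han : a n = t := by simp [a, hn]
  have ha_succ : ∀ j, a (j + 1) = a j + t / n := fun j => by simp only [a]; push_cast; ring
  have ha_le : ∀ j, a j ≤ a (j + 1) := fun j => by
    rw [ha_succ]; linarith [div_nonneg ht n.cast_nonneg]
  have hsub : ∀ j < n, Icc (a j) (a (j + 1)) ⊆ Icc 0 t := fun j hj =>
    Icc_subset_Icc (natCast_mul_div_mem_Icc ht hj.le).1 (natCast_mul_div_mem_Icc ht hj).2
  have hmesh : ∀ j, ∀ s ∈ Ioc (a j) (a (j + 1)), dist s (a (j + 1)) ≤ t / n := fun j s hs => by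
    rw [Real.dist_eq, abs_sub_comm, abs_of_nonneg (by linarith [hs.2])]
    linarith [hs.1, ha_succ j]
  refine ContinuousLinearMap.opNorm_le_bound _ (by positivity) fun x => ?_
  have hS : (∑ j ∈ range n, f ((j + 1) * t / n) ∘L P j) x =
      ∑ j ∈ range n, f (a (j + 1)) (∫ s in a j..a (j + 1), g s x) := by
    rw [_root_.sum_apply]
    refine sum_congr rfl fun j hj => ?_
    rw [ContinuousLinearMap.comp_apply, hP j (mem_range.1 hj)]
    simp only [a, Nat.cast_succ]
  calc ‖(T - ∑ j ∈ range n, f ((j + 1) * t / n) ∘L P j) x‖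
      = ‖(∫ s in a 0..a n, f s (g s x)) -
          ∑ j ∈ range n, f (a (j + 1)) (∫ s in a j..a (j + 1), g s x)‖ := by
        rw [sub_apply, hT, hS, ha0, han]
    _ ≤ η * (C * ‖x‖) * (a n - a 0) :=
        norm_intervalIntegral_sub_sum_apply_intervalIntegral_le (fun j _ => ha_le j)
          (fun j hj => ((hg x).mono (hsub j hj)).intervalIntegrable_of_Icc (ha_le j))
          (fun j hj => ((hf.clm_apply (hg x)).mono (hsub j hj)).intervalIntegrable_of_Icc (ha_le j))
          (fun j hj s hs => hfη s (hsub j hj (Ioc_subset_Icc_self hs)) _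
            (natCast_mul_div_mem_Icc ht hj) (hmesh j s hs))
          (fun j hj s hs => (g s).le_of_opNorm_le (hC s (hsub j hj (Ioc_subset_Icc_self hs))) x)
    _ = η * C * t * ‖x‖ := by rw [ha0, han]; ring

theorem tendsto_sum_comp_intervalIntegral (ht : 0 ≤ t)
    (hf : ContinuousOn f (Icc 0 t)) (hg : ∀ x, ContinuousOn (fun s => g s x) (Icc 0 t))
    (hC : ∀ s ∈ Icc 0 t, ‖g s‖ ≤ C) (hT : ∀ x, T x = ∫ s in 0..t, f s (g s x))
    {P : ℕ → ℕ → E →L[ℂ] F}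
    (hP : ∀ n, ∀ j < n, ∀ x, P n j x = ∫ s in j * t / n..(j + 1) * t / n, g s x) :
    Tendsto (fun n : ℕ => ∑ j ∈ range n, f ((j + 1) * t / n) ∘L P n j) atTop (𝓝 T) := by
  have hC0 : 0 ≤ C := (norm_nonneg _).trans (hC 0 ⟨le_rfl, ht⟩)
  rw [Metric.tendsto_atTop]
  intro ε hε
  set η := ε / (C * t + 1)
  have hη : 0 < η := by positivity
  have hηε : η * C * t < ε := by
    rw [mul_assoc, div_mul_eq_mul_div, div_lt_iff₀ (by positivity)]
    nlinarith
  obtain ⟨δ, hδ, hfδ⟩ := Metric.uniformContinuousOn_iff.1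
    (isCompact_Icc.uniformContinuousOn_of_continuous hf) η hη
  obtain ⟨N, hN⟩ := exists_nat_gt (t / δ)
  refine ⟨N, fun n hn => ?_⟩
  have hn0 : (0 : ℝ) < n := (div_nonneg ht hδ.le).trans_lt (hN.trans_le (by exact_mod_cast hn))
  have hmesh : t / n < δ := (div_lt_comm₀ hn0 hδ).2 (hN.trans_le (by exact_mod_cast hn))
  rw [dist_comm, dist_eq_norm]
  refine (norm_sub_sum_comp_intervalIntegral_le ht (Nat.cast_pos.1 hn0).ne' hf hg hC hT (hP n)
    hη.le fun s hs s' hs' hss' => ?_).trans_lt hηε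
  exact (dist_eq_norm (f s) (f s') ▸ hfδ s hs s' hs' (hss'.trans_lt hmesh)).le

end StrongIntegral

/-- Key induction step for the Dyson series: let `B` be a norm-closed subalgebra of `B(H)`,
`f` norm-continuous on `[0,t]` with values in `B`, `g` strongly continuous on `[0,t]` and
uniformly bounded there, such that all the strong-operator integrals `x ↦ ∫_r^{r'} g(s)x ds`
over subintervals of `[0,t]` belong to `B`. Then the strong-operator integral
`x ↦ ∫₀ᵗ f(s)(g(s)x) ds` is a bounded operator belonging to `B`. -/
theorem strong_integral_mem_closed_subalgebra {H : Type*} [NormedAddCommGroup H]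
    [InnerProductSpace ℂ H] [CompleteSpace H]
    (B : NonUnitalSubalgebra ℂ (H →L[ℂ] H)) (hB : IsClosed (B : Set (H →L[ℂ] H)))
    (t : ℝ) (ht : 0 < t) (f g : ℝ → H →L[ℂ] H) (C : ℝ)
    (hf_cont : ContinuousOn f (Icc 0 t))
    (hf_mem : ∀ s ∈ Icc (0 : ℝ) t, f s ∈ B)
    (hg_cont : ∀ x : H, ContinuousOn (fun s => g s x) (Icc 0 t))
    (hg_bdd : ∀ s ∈ Icc (0 : ℝ) t, ‖g s‖ ≤ C)
    (hg_int_mem : ∀ r r' : ℝ, 0 ≤ r → r ≤ r' → r' ≤ t →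
        ∃ G : H →L[ℂ] H, (∀ x : H, G x = ∫ s in r..r', g s x) ∧ G ∈ B) :
    ∃ T : H →L[ℂ] H, (∀ x : H, T x = ∫ s in (0 : ℝ)..t, f s (g s x)) ∧ T ∈ B := by
  obtain ⟨M, hM⟩ := isCompact_Icc.exists_bound_of_continuousOn hf_cont
  have hfg_bdd : ∀ s ∈ Ι 0 t, ‖f s ∘L g s‖ ≤ M * C := fun s hs => by
    have hs : s ∈ Icc 0 t := Ioc_subset_Icc_self (uIoc_of_le ht.le ▸ hs)
    exact (f s).opNorm_comp_le (g s) |>.trans <|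
      mul_le_mul (hM s hs) (hg_bdd s hs) (norm_nonneg _) ((norm_nonneg _).trans (hM s hs))
  obtain ⟨T, hT⟩ := exists_continuousLinearMap_eq_intervalIntegral_apply
    (fun x => (hf_cont.clm_apply (hg_cont x)).intervalIntegrable_of_Icc ht.le) hfg_bdd
  have hpart : ∀ {j n : ℕ}, j < n → ((j + 1 : ℝ) * t / n) ∈ Icc 0 t := fun hj => by
    exact_mod_cast natCast_mul_div_mem_Icc ht.le hj
  choose! P hP hPB using fun (n j : ℕ) (hj : j < n) =>
    hg_int_mem (j * t / n) ((j + 1) * t / n) (natCast_mul_div_mem_Icc ht.le hj.le).1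
      (by gcongr; linarith) (hpart hj).2
  refine ⟨T, hT, hB.mem_of_tendsto (tendsto_sum_comp_intervalIntegral ht.le hf_cont hg_cont
    hg_bdd hT hP) (Eventually.of_forall fun n => sum_mem fun j hj => ?_)⟩
  exact B.mul_mem (hf_mem _ (hpart (mem_range.1 hj))) (hPB n j (mem_range.1 hj))
end

section
/- Let A be a unital complex C*-algebra, let B ⊆ A be a norm-closed star-subalgebra, and let h₀, v ∈ A be self-adjoint with v ∈ B. Assume that exp(it h₀)·b·exp(−it h₀) ∈ B for all b ∈ B and all t ∈ ℝ. Then, with H := h₀ + v, one also has exp(it H)·b·exp(−it H) ∈ B for all b ∈ B and all t ∈ ℝ. -/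
/-!
Differentiating the free dynamics at `t = 0` shows that the derivation `ad (i h₀)` maps the
closed subspace `B` into itself, and so does `ad (i v)` because `v ∈ B`. Hence `ad (i H)` leaves
`B` invariant, and so does every `exp (t • ad (i H))`, whose terms are powers of `ad (i H)`.
By Hadamard's formula `exp (t x) b exp (-t x) = exp (t • ad x) b`, these operators implement the
interacting dynamics.
-/

open NormedSpace Filter

section Ad

variable (𝕜 : Type*) {A : Type*} [NontriviallyNormedField 𝕜] [NormedRing A] [NormedAlgebra 𝕜 A]

noncomputable def adCLM : A →L[𝕜] A →L[𝕜] A :=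
  ContinuousLinearMap.mul 𝕜 A - (ContinuousLinearMap.mul 𝕜 A).flip

@[simp]
lemma adCLM_apply (x y : A) : adCLM 𝕜 x y = x * y - y * x := rfl

end Ad

lemma exp_apply_mem_of_mapsTo {𝕜 E : Type*} [RCLike 𝕜] [NormedAddCommGroup E]
    [NormedSpace 𝕜 E] [CompleteSpace E] {S : Submodule 𝕜 E} (hS : IsClosed (S : Set E))
    {T : E →L[𝕜] E} (hT : Set.MapsTo T S S) {y : E} (hy : y ∈ S) : exp T y ∈ S := by
  have hsum : HasSum (fun n => ((n.factorial⁻¹ : 𝕜) • T ^ n) y) (exp T y) :=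
    (exp_series_hasSum_exp' (𝕂 := 𝕜) T).mapL (ContinuousLinearMap.apply 𝕜 E y)
  have hpow (n : ℕ) : (T ^ n) y ∈ S := by
    induction n with
    | zero => simpa using hy
    | succ n ih => rw [pow_succ', mul_apply_eq_comp]; exact hT ih
  exact hS.mem_of_tendsto hsum.tendsto_sum_nat
    (Eventually.of_forall fun n => S.sum_mem fun k _ => S.smul_mem _ (hpow k))

section Conjugation

variable {𝕜 A : Type*} [RCLike 𝕜] [NormedRing A] [NormedAlgebra 𝕜 A] [CompleteSpace A]

lemma hasDerivAt_exp_smul_mul_mul_exp_smul_neg (x b : A) (t : 𝕜) :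
    HasDerivAt (fun s : 𝕜 => exp (s • x) * b * exp (s • -x))
      (adCLM 𝕜 x (exp (t • x) * b * exp (t • -x))) t := by
  convert ((hasDerivAt_exp_smul_const' x t).mul_const b).fun_mul
    (hasDerivAt_exp_smul_const (-x) t) using 1
  rw [adCLM_apply]
  noncomm_ring

/-- Both sides solve `f' = ad x f` with `f 0 = b`: the derivative of
`s ↦ exp (s • -ad x) (exp (s • x) * b * exp (s • -x))` vanishes. -/
lemma exp_smul_mul_mul_exp_smul_neg (x b : A) (t : 𝕜) :
    exp (t • x) * b * exp (t • -x) = exp (t • adCLM 𝕜 x) b := by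
  set D := adCLM 𝕜 x
  have hderiv (s : 𝕜) :
      HasDerivAt (fun s : 𝕜 => exp (s • -D) (exp (s • x) * b * exp (s • -x))) 0 s := by
    refine ((hasDerivAt_exp_smul_const (-D) s).clm_apply
      (hasDerivAt_exp_smul_mul_mul_exp_smul_neg x b s)).congr_deriv ?_
    rw [mul_apply_eq_comp, neg_apply, map_neg, neg_add_cancel]
  have hconst := is_const_of_deriv_eq_zero (fun s => (hderiv s).differentiableAt)
    (fun s => (hderiv s).deriv) t 0
  rw [zero_smul 𝕜 (-D)] at hconst
  simp only [zero_smul, exp_zero, mul_one, one_mul, one_apply_eq_self] at hconst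
  have hinv : exp (t • D) * exp (t • -D) = 1 := by
    let : NormedAlgebra ℚ (A →L[𝕜] A) := NormedAlgebra.restrictScalars ℚ 𝕜 _
    rw [smul_neg, ← exp_add_of_commute (Commute.refl (t • D)).neg_right, add_neg_cancel, exp_zero]
  calc exp (t • x) * b * exp (t • -x)
      = (exp (t • D) * exp (t • -D)) (exp (t • x) * b * exp (t • -x)) := by
        rw [hinv, one_apply_eq_self]
    _ = exp (t • D) b := by rw [mul_apply_eq_comp, hconst]

lemma adCLM_apply_mem_of_forall_exp_smul_mul_mul_exp_smul_neg_mem {S : Submodule 𝕜 A}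
    (hS : IsClosed (S : Set A)) {x b : A} (h : ∀ t : 𝕜, exp (t • x) * b * exp (t • -x) ∈ S) :
    adCLM 𝕜 x b ∈ S := by
  have hslope := (hasDerivAt_exp_smul_mul_mul_exp_smul_neg x b (0 : 𝕜)).tendsto_slope
  simp only [zero_smul, exp_zero, mul_one, one_mul] at hslope
  refine hS.mem_of_tendsto hslope (Eventually.of_forall fun t => ?_)
  rw [slope_def_module]
  exact S.smul_mem _ (S.sub_mem (h t) (by simpa using h 0))

end Conjugation

theorem interacting_dynamics_stable_general {A : Type*} [CStarAlgebra A]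
    (B : NonUnitalStarSubalgebra ℂ A) (hB : IsClosed (B : Set A))
    (h₀ v : A) (hvB : v ∈ B)
    (hfree : ∀ b ∈ B, ∀ t : ℝ,
        exp (((t : ℂ) * Complex.I) • h₀) * b *
          exp ((-((t : ℂ) * Complex.I)) • h₀) ∈ B) :
    ∀ b ∈ B, ∀ t : ℝ,
      exp (((t : ℂ) * Complex.I) • (h₀ + v)) * b *
        exp ((-((t : ℂ) * Complex.I)) • (h₀ + v)) ∈ B := by
  let S : Submodule ℝ A := B.toNonUnitalSubalgebra.toSubmodule.restrictScalars ℝ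
  have hS : IsClosed (S : Set A) := hB
  have hsmul (t : ℝ) (y : A) : ((t : ℂ) * Complex.I) • y = t • (Complex.I • y) := by
    rw [mul_smul, Complex.coe_smul]
  have hneg (t : ℝ) (y : A) : (-((t : ℂ) * Complex.I)) • y = t • -(Complex.I • y) := by
    rw [neg_smul, hsmul, smul_neg]
  have had_h₀ : Set.MapsTo (adCLM ℝ (Complex.I • h₀)) S S := fun c hc =>
    adCLM_apply_mem_of_forall_exp_smul_mul_mul_exp_smul_neg_mem hS fun t =>
      show _ ∈ B by simpa only [hsmul, hneg] using hfree c hc t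
  have had_v : Set.MapsTo (adCLM ℝ (Complex.I • v)) S S := fun c hc =>
    S.sub_mem (B.mul_mem (B.smul_mem Complex.I hvB) hc) (B.mul_mem hc (B.smul_mem Complex.I hvB))
  intro b hb t
  rw [hsmul, hneg, exp_smul_mul_mul_exp_smul_neg]
  refine exp_apply_mem_of_mapsTo hS (fun c hc => ?_) hb
  rw [smul_add, map_add, smul_apply, add_apply]
  exact S.smul_mem t (S.add_mem (had_h₀ hc) (had_v hc))

/-- Stability of a kinematical algebra under perturbed dynamics: if a norm-closed
star-subalgebra `B` of a unital C*-algebra is stable under the free dynamics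
`b ↦ exp(it h₀)·b·exp(−it h₀)` and contains the self-adjoint interaction `v`, then `B` is
stable under the interacting dynamics `b ↦ exp(itH)·b·exp(−itH)` with `H = h₀ + v`. -/
theorem interacting_dynamics_stable {A : Type*} [CStarAlgebra A]
    (B : NonUnitalStarSubalgebra ℂ A) (hB : IsClosed (B : Set A))
    (h₀ v : A) (hh₀ : IsSelfAdjoint h₀) (hv : IsSelfAdjoint v) (hvB : v ∈ B)
    (hfree : ∀ b ∈ B, ∀ t : ℝ,
        exp (((t : ℂ) * Complex.I) • h₀) * b *
          exp ((-((t : ℂ) * Complex.I)) • h₀) ∈ B) :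
    ∀ b ∈ B, ∀ t : ℝ,
      exp (((t : ℂ) * Complex.I) • (h₀ + v)) * b *
        exp ((-((t : ℂ) * Complex.I)) • (h₀ + v)) ∈ B :=
  interacting_dynamics_stable_general B hB h₀ v hvB hfree
end
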